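/- Let R be a finite commutative local ring. Then the number of polynomial permutations of the ring of dual numbers R[α] satisfies |P(R[α])| = |F(R)| · |P(R)| · |St_α(R)|, where |F(R)| is the number of polynomial functions on R, |P(R)| is the number of polynomial permutations of R, and |St_α(R)| is the order of the pointwise stabilizer of R in P(R[α]). -/

import Mathlib

open Polynomial

/-- The set of polynomial functions on a commutative ring `A`. -/
def polyFunctions (A : Type*) [CommRing A] : Set (A → A) :=
  {G : A → A | ∃ f : Polynomial A, ∀ a, G a = f.eval a}

/-- The set of polynomial permutations of a commutative ring `A`. -/
def polyPermutations (A : Type*) [CommRing A] : Set (A → A) :=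
  {G : A → A | (∃ f : Polynomial A, ∀ a, G a = f.eval a) ∧ Function.Bijective G}

/-- The pointwise stabilizer `St_α(R)` of `R` in the group of polynomial
permutations of the dual numbers `R[α]`. -/
def polyStabilizer (R : Type*) [CommRing R] :
    Set (DualNumber R → DualNumber R) :=
  {G : DualNumber R → DualNumber R |
    (∃ f : Polynomial (DualNumber R), ∀ a, G a = f.eval a) ∧
      Function.Bijective G ∧
        ∀ r : R, G (algebraMap R (DualNumber R) r) = algebraMap R (DualNumber R) r}

/-!
`P(R[α])` acts on maps `R → R[α]` by post-composition, and the stabilizer of the inclusion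
`a ↦ a + 0·α` is `St_α(R)`; by orbit–stabilizer it remains to identify its orbit. Writing the
restriction of `F` to `R` as `a ↦ G(a) + H(a)α`, the orbit corresponds exactly to the pairs
with `H ∈ F(R)` and `G ∈ P(R)`. Conversely, `(H, G)` lifts to `g + αh` as soon as `g` represents `G`
with `g'` a unit everywhere, since `x₀ + x₁α ↦ g(x₀) + (g'(x₀)x₁ + h(x₀))α` is then injective.
Such a `g` exists because `R` is local: over a field, adjust `g` by a multiple of `X ^ q - X`;
otherwise some `t ≠ 0` kills the maximal ideal, and `g(a + t) = g(a) + g'(a)t` forces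
`g'(a)` to be a unit.
-/

open TrivSqZeroExt

section PolyPermGroup

variable (A : Type*) [CommRing A]

def polyPermSubmonoid : Submonoid (Equiv.Perm A) where
  carrier := {σ | ∃ f : A[X], ∀ a, σ a = f.eval a}
  one_mem' := ⟨X, fun a => by simp⟩
  mul_mem' := by
    rintro σ τ ⟨f, hf⟩ ⟨g, hg⟩
    exact ⟨f.comp g, fun a => by simp [hf, hg]⟩

/-- Inverses come for free: in the finite group `Equiv.Perm A`, `σ⁻¹` is a power of `σ`. -/
def polyPermGroup [Finite A] : Subgroup (Equiv.Perm A) :=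
  { polyPermSubmonoid A with
    inv_mem' := fun {σ} hσ => Submonoid.powers_le.2 hσ <|
      mem_powers_iff_mem_zpowers.2 <| inv_mem <| Subgroup.mem_zpowers σ }

noncomputable def polyPermutationsEquivPolyPermGroup [Finite A] :
    polyPermutations A ≃ polyPermGroup A where
  toFun G := ⟨Equiv.ofBijective G.1 G.2.2, G.2.1⟩
  invFun σ := ⟨σ, σ.2, σ.1.bijective⟩
  left_inv _ := rfl
  right_inv _ := Subtype.ext (Equiv.ext fun _ => rfl)

end PolyPermGroup

theorem Ideal.exists_ne_zero_mul_eq_zero_of_isNilpotent {R : Type*} [CommRing R] {I : Ideal R}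
    (hI : IsNilpotent I) (hI0 : I ≠ ⊥) : ∃ t ∈ I, t ≠ 0 ∧ ∀ x ∈ I, t * x = 0 := by
  obtain ⟨x, -, hx⟩ := Submodule.exists_mem_ne_zero_of_ne_bot hI0
  have := nontrivial_of_ne x 0 hx
  obtain ⟨k, hk⟩ : ∃ k, nilpotencyClass I = k + 2 := by
    have h0 := pos_nilpotencyClass_iff.2 hI
    have h1 : nilpotencyClass I ≠ 1 := by simpa using hI0
    exact ⟨nilpotencyClass I - 2, by omega⟩
  obtain ⟨hk2, hk1⟩ := nilpotencyClass_eq_succ_iff.mp hk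
  obtain ⟨t, ht, ht0⟩ := Submodule.exists_mem_ne_zero_of_ne_bot hk1
  refine ⟨t, Ideal.pow_le_self (Nat.succ_ne_zero k) ht, ht0, fun x hx => ?_⟩
  have : t * x ∈ I ^ (k + 2) := pow_succ I (k + 1) ▸ Ideal.mul_mem_mul ht hx
  simpa [hk2] using this

theorem FiniteField.exists_eval_eq_and_derivative_eval_eq_one {K : Type*} [Field K] [Finite K]
    (p : K[X]) : ∃ q : K[X], (∀ a, q.eval a = p.eval a) ∧ ∀ a, q.derivative.eval a = 1 := by
  classical
  have := Fintype.ofFinite K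
  obtain ⟨w, hw⟩ : ∃ w : K[X], ∀ a, w.eval a = p.derivative.eval a - 1 :=
    ⟨Lagrange.interpolate Finset.univ id fun a => p.derivative.eval a - 1,
      fun a => Lagrange.eval_interpolate_at_node _ (Set.injOn_id _) (Finset.mem_univ a)⟩
  -- `X ^ q - X` vanishes on `K` and its derivative is `-1` there
  refine ⟨p + (X ^ Fintype.card K - X) * w, fun a => by simp [FiniteField.pow_card],
    fun a => ?_⟩
  simp [derivative_X_pow, FiniteField.pow_card, hw]

section LocalRing

variable {R : Type*} [CommRing R] [IsLocalRing R]

theorem isUnit_derivative_eval_of_injective [IsArtinianRing R] (hR : ¬ IsField R) {p : R[X]}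
    (hp : Function.Injective fun a => p.eval a) (a : R) : IsUnit (p.derivative.eval a) := by
  have hm := (isArtinianRing_iff_isNilpotent_maximalIdeal R).1 ‹_›
  obtain ⟨t, htm, ht0, ht⟩ := Ideal.exists_ne_zero_mul_eq_zero_of_isNilpotent hm
    (mt IsLocalRing.isField_iff_maximalIdeal_eq.2 hR)
  by_contra hu
  have : p.eval (a + t) = p.eval a := by
    rw [eval_add_of_sq_eq_zero _ _ _ (sq t ▸ ht t htm), mul_comm, ht _ hu, add_zero]
  exact ht0 (by simpa using hp this)

theorem exists_eq_eval_and_isUnit_derivative_eval [Finite R] {G : R → R}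
    (hG : G ∈ polyPermutations R) :
    ∃ p : R[X], (∀ a, G a = p.eval a) ∧ ∀ a, IsUnit (p.derivative.eval a) := by
  obtain ⟨⟨p, hp⟩, hG⟩ := hG
  obtain rfl : G = fun a => p.eval a := funext hp
  by_cases hR : IsField R
  · let := hR.toField
    obtain ⟨q, hq, hq'⟩ := FiniteField.exists_eval_eq_and_derivative_eval_eq_one p
    exact ⟨q, fun a => (hq a).symm, fun a => hq' a ▸ isUnit_one⟩
  · exact ⟨p, hp, isUnit_derivative_eval_of_injective hR hG.injective⟩

end LocalRing

namespace DualNumber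

variable {R : Type*} [CommRing R]

instance [Finite R] : Finite (DualNumber R) := inferInstanceAs (Finite (R × R))

theorem aeval_inl_add_inr (p : R[X]) (a b : R) :
    aeval (inl a + inr b : DualNumber R) p = inl (p.eval a) + inr (p.derivative.eval a * b) := by
  have h (q : R[X]) : aeval (inl a : DualNumber R) q = inl (q.eval a) :=
    aeval_algebraMap_apply_eq_algebraMap_eval a q
  rw [aeval_add_of_sq_eq_zero _ _ _ (by simp [sq]), h, h]
  ext <;> simp [mul_comm]

theorem exists_eval_inl_eq (f : (DualNumber R)[X]) :
    ∃ p q : R[X], ∀ a, f.eval (inl a) = inl (p.eval a) + inr (q.eval a) := by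
  induction f using Polynomial.induction_on' with
  | add f g hf hg =>
    obtain ⟨p₁, q₁, h₁⟩ := hf
    obtain ⟨p₂, q₂, h₂⟩ := hg
    exact ⟨p₁ + p₂, q₁ + q₂, fun a => by ext <;> simp [h₁, h₂]⟩
  | monomial n c =>
    refine ⟨monomial n c.fst, monomial n c.snd, fun a => ?_⟩
    ext <;> simp [← inl_pow]

theorem fst_eval (f : (DualNumber R)[X]) (x : DualNumber R) :
    (f.eval x).fst = (f.eval (inl x.fst)).fst := by
  have h (y : DualNumber R) : (f.eval y).fst = (f.map (fstHom R R R).toRingHom).eval y.fst :=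
    (eval_map_apply (p := f) (f := (fstHom R R R).toRingHom) y).symm
  rw [h, h, fst_inl]

theorem eval_map_add_C_eps_mul (p q : R[X]) (a b : R) :
    (p.map (algebraMap R (DualNumber R)) + C ε * q.map (algebraMap R (DualNumber R))).eval
      (inl a + inr b) = inl (p.eval a) + inr (p.derivative.eval a * b + q.eval a) := by
  rw [eval_add, eval_mul, eval_C, eval_map_algebraMap, eval_map_algebraMap, aeval_inl_add_inr,
    aeval_inl_add_inr]
  ext <;> simp

theorem injective_eval_map_add_C_eps_mul {p : R[X]} (hp : Function.Injective fun a => p.eval a)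
    (hp' : ∀ a, IsUnit (p.derivative.eval a)) (q : R[X]) :
    Function.Injective fun x =>
      (p.map (algebraMap R (DualNumber R)) + C ε * q.map (algebraMap R (DualNumber R))).eval x := by
  intro x y hxy
  rw [← inl_fst_add_inr_snd_eq x, ← inl_fst_add_inr_snd_eq y] at hxy ⊢
  simp only [eval_map_add_C_eps_mul] at hxy
  have h₁ : x.fst = y.fst := hp (by simpa using congrArg fst hxy)
  rw [h₁] at hxy
  have h₂ : x.snd = y.snd := (hp' y.fst).mul_left_cancel (by simpa using congrArg snd hxy)
  rw [h₁, h₂]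

theorem mem_orbit_inl_iff [Finite R] [IsLocalRing R] (φ : R → DualNumber R) :
    φ ∈ MulAction.orbit (polyPermGroup (DualNumber R)) (inl : R → DualNumber R) ↔
      (fun a => (φ a).snd) ∈ polyFunctions R ∧ (fun a => (φ a).fst) ∈ polyPermutations R := by
  constructor
  · rintro ⟨σ, rfl⟩
    obtain ⟨f, hf⟩ := σ.2
    obtain ⟨p, q, hpq⟩ := exists_eval_inl_eq f
    have hσ (a : R) : σ.1 (inl a) = inl (p.eval a) + inr (q.eval a) := (hf _).trans (hpq a)
    refine ⟨⟨q, fun a => by simp [Subgroup.smul_def, hσ]⟩,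
      ⟨p, fun a => by simp [Subgroup.smul_def, hσ]⟩, ?_⟩
    rw [← Finite.surjective_iff_bijective]
    intro c
    obtain ⟨x, hx⟩ := σ.1.surjective (inl c)
    refine ⟨x.fst, ?_⟩
    simp only [Pi.smul_apply, Subgroup.smul_def, Equiv.Perm.smul_def, hf]
    rw [← fst_eval, ← hf, hx, fst_inl]
  · rintro ⟨⟨q, hq⟩, hG⟩
    obtain ⟨p, hp, hp'⟩ := exists_eq_eval_and_isUnit_derivative_eval hG
    have hf := injective_eval_map_add_C_eps_mul (funext hp ▸ hG.2.injective) hp' q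
    refine ⟨⟨Equiv.ofBijective _ (Finite.injective_iff_bijective.1 hf), _, fun _ => rfl⟩,
      funext fun a => ?_⟩
    have h0 : (inl a : DualNumber R) = inl a + inr 0 := by simp
    change eval (inl a) _ = φ a
    rw [h0, eval_map_add_C_eps_mul, ← hp, ← hq, mul_zero, zero_add, inl_fst_add_inr_snd_eq]

noncomputable def orbitInlEquiv [Finite R] [IsLocalRing R] :
    MulAction.orbit (polyPermGroup (DualNumber R)) (inl : R → DualNumber R) ≃
      polyFunctions R × polyPermutations R where
  toFun φ := (⟨_, ((mem_orbit_inl_iff φ).1 φ.2).1⟩, ⟨_, ((mem_orbit_inl_iff φ).1 φ.2).2⟩)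
  invFun HG := ⟨fun a => inl (HG.2.1 a) + inr (HG.1.1 a),
    (mem_orbit_inl_iff _).2 (by simp [HG.1.2, HG.2.2])⟩
  left_inv φ := by ext a <;> simp
  right_inv HG := by ext a <;> simp

noncomputable def stabilizerInlEquiv [Finite R] :
    MulAction.stabilizer (polyPermGroup (DualNumber R)) (inl : R → DualNumber R) ≃
      polyStabilizer R where
  toFun σ := ⟨σ.1.1, σ.1.2, σ.1.1.bijective, fun r => congrFun σ.2 r⟩
  invFun G := ⟨⟨Equiv.ofBijective G.1 G.2.2.1, G.2.1⟩, funext G.2.2.2⟩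
  left_inv _ := Subtype.ext (Subtype.ext (Equiv.ext fun _ => rfl))
  right_inv _ := rfl

end DualNumber

/-- **Theorem.**
For a finite commutative local ring `R`,
`|P(R[α])| = |F(R)| · |P(R)| · |St_α(R)|`. -/
theorem card_polyPerm_dualNumber_local (R : Type*) [CommRing R] [Finite R]
    [IsLocalRing R] :
    Nat.card (polyPermutations (DualNumber R)) =
      Nat.card (polyFunctions R) * Nat.card (polyPermutations R) *
        Nat.card (polyStabilizer R) := by
  rw [Nat.card_congr (polyPermutationsEquivPolyPermGroup _),
    ← Nat.card_congr (MulAction.orbitProdStabilizerEquivGroup _ (inl : R → DualNumber R)),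
    Nat.card_prod, Nat.card_congr DualNumber.orbitInlEquiv,
    Nat.card_congr DualNumber.stabilizerInlEquiv, Nat.card_prod]
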